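/- arXiv:1907.00902 — 4 statements merged into one kernel-verified Lean document; each statement's English description precedes it below -/
import Mathlib

section
/- Given a set of working individuals sorted in ascending order of their failure times, there exists an optimal maintenance schedule in which the actual replacement times follow the same order: if individual A fails before individual B, then A is replaced no later than B. -/
/-!
Take any optimal schedule `σ` and replace each individual `i` at the earliest time `σ` uses for
an individual failing no earlier than `i`. This is monotone in the failure time, still feasible,
replaces nobody later than `σ` did (so nobody newly pays the corrective cost), and uses only
replacement times that `σ` already uses (so the setup cost does not grow); hence it is optimal too.
-/

open Finset

/-- Feasibility of a replacement schedule `τ`: every individual is replaced at some period in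
`{1,…}` no later than its failure time. -/
def Feasible {ι : Type*} (f : ι → ℕ) (τ : ι → ℕ) : Prop :=
  ∀ i, 1 ≤ τ i ∧ τ i ≤ f i

/-- Total maintenance cost of schedule `τ`: corrective cost at the failure time, preventive
cost strictly earlier, plus one setup cost `d` per distinct replacement time used. -/
noncomputable def totalCost {ι : Type*} [Fintype ι] [DecidableEq ι] (f : ι → ℕ)
    (cpr ccr : ι → ℝ) (d : ℝ) (τ : ι → ℕ) : ℝ :=
  (∑ i, if τ i = f i then ccr i else cpr i) + d * ((Finset.univ.image τ).card : ℝ)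

section

variable {ι : Type*}

theorem exists_feasible_min_image [Finite ι] {β : Type*} [LinearOrder β] (f : ι → ℕ)
    (hf : ∀ i, 1 ≤ f i) (g : (ι → ℕ) → β) :
    ∃ σ, Feasible f σ ∧ ∀ σ', Feasible f σ' → g σ ≤ g σ' := by
  have hfin : {σ | Feasible f σ}.Finite :=
    (Set.Finite.pi fun i => Set.finite_Icc 1 (f i)).subset fun σ hσ i _ => hσ i
  exact Set.exists_min_image _ g hfin ⟨f, fun i => ⟨hf i, le_rfl⟩⟩

variable [Fintype ι]

theorem totalCost_le_of_le [DecidableEq ι] {f : ι → ℕ} {cpr ccr : ι → ℝ} {d : ℝ}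
    (hc : ∀ i, cpr i ≤ ccr i) (hd : 0 ≤ d) {σ τ : ι → ℕ} (hσ : ∀ i, σ i ≤ f i)
    (hτσ : ∀ i, τ i ≤ σ i) (himage : univ.image τ ⊆ univ.image σ) :
    totalCost f cpr ccr d τ ≤ totalCost f cpr ccr d σ := by
  unfold totalCost
  gcongr with i
  by_cases hτi : τ i = f i
  · have hσi : σ i = f i := le_antisymm (hσ i) (hτi ▸ hτσ i)
    simp [hτi, hσi]
  · split_ifs <;> simp [hc i]

noncomputable def earliestLater (f σ : ι → ℕ) (i : ι) : ℕ :=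
  (univ.filter fun j => f i ≤ f j).inf' ⟨i, by simp⟩ σ

variable {f σ : ι → ℕ}

theorem earliestLater_le (i : ι) : earliestLater f σ i ≤ σ i :=
  inf'_le σ (by simp)

theorem earliestLater_mono {i j : ι} (hij : f i ≤ f j) :
    earliestLater f σ i ≤ earliestLater f σ j := by
  obtain ⟨k, hk, hjk⟩ := exists_mem_eq_inf' (s := univ.filter fun k => f j ≤ f k) ⟨j, by simp⟩ σ
  rw [earliestLater, earliestLater, hjk]
  exact inf'_le σ (mem_filter.2 ⟨mem_univ k, hij.trans (mem_filter.1 hk).2⟩)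

theorem earliestLater_mem_range (i : ι) : earliestLater f σ i ∈ Set.range σ := by
  obtain ⟨k, -, hk⟩ := exists_mem_eq_inf' (s := univ.filter fun k => f i ≤ f k) ⟨i, by simp⟩ σ
  exact ⟨k, hk.symm⟩

theorem Feasible.earliestLater (hσ : Feasible f σ) : Feasible f (earliestLater f σ) :=
  fun i => ⟨le_inf' _ _ fun j _ => (hσ j).1, (earliestLater_le i).trans (hσ i).2⟩

theorem image_earliestLater_subset :
    univ.image (earliestLater f σ) ⊆ univ.image σ :=
  image_subset_iff.2 fun i _ => mem_image_univ_iff_mem_range.2 (earliestLater_mem_range i)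

end

theorem exists_optimal_order_preserving_general
    {ι : Type*} [Fintype ι] [DecidableEq ι]
    (f : ι → ℕ) (cpr ccr : ι → ℝ) (d : ℝ)
    (hf : ∀ i, 1 ≤ f i) (hc : ∀ i, cpr i < ccr i) (hd : 0 < d) :
    ∃ τ : ι → ℕ, Feasible f τ ∧
      (∀ σ : ι → ℕ, Feasible f σ → totalCost f cpr ccr d τ ≤ totalCost f cpr ccr d σ) ∧
      ∀ i j, f i < f j → τ i ≤ τ j := by
  obtain ⟨σ, hσ, hσmin⟩ := exists_feasible_min_image f hf (totalCost f cpr ccr d)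
  have hcost : totalCost f cpr ccr d (earliestLater f σ) ≤ totalCost f cpr ccr d σ :=
    totalCost_le_of_le (fun i => (hc i).le) hd.le (fun i => (hσ i).2) earliestLater_le
      image_earliestLater_subset
  exact ⟨earliestLater f σ, hσ.earliestLater, fun σ' hσ' => hcost.trans (hσmin σ' hσ'),
    fun i j hij => earliestLater_mono hij.le⟩

/-- Theorem 2: there exists an optimal schedule whose actual replacement times follow the
order of the failure times: if individual `i` fails before individual `j`, then `i` is
replaced no later than `j`. -/
theorem exists_optimal_order_preserving
    {ι : Type*} [Fintype ι] [DecidableEq ι] [Nonempty ι]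
    (f : ι → ℕ) (cpr ccr : ι → ℝ) (d : ℝ)
    (hf : ∀ i, 1 ≤ f i) (hc : ∀ i, cpr i < ccr i) (hd : 0 < d) :
    ∃ τ : ι → ℕ, Feasible f τ ∧
      (∀ σ : ι → ℕ, Feasible f σ → totalCost f cpr ccr d τ ≤ totalCost f cpr ccr d σ) ∧
      ∀ i j, f i < f j → τ i ≤ τ j :=
  exists_optimal_order_preserving_general f cpr ccr d hf hc hd
end

section
/- Let β : K → ℕ be tentative replacement times of a finite set K of working individuals, sorted as β(K'[1]) ≤ ... ≤ β(K'[k]). For any window length ι ≥ 0, the greedy partition that starts a new group at the first unassigned individual and assigns to it all subsequent individuals whose tentative time is within ι of the group leader's time yields a partition of K' into consecutive intervals; moreover within each group, max β − min β ≤ ι. -/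
/-!
The greedy procedure is a recursion on the leader: the block led by `s` runs up to the first
later position `t` with `β s + ι < β t` (or to the end), and the rest is the greedy partition
from `t`. Every member of a block is then within `ι` of its leader by minimality of `t`, and
since `β` is sorted the leader has the least time of its block, which bounds the spread.
-/

/-- The blocks are `[b j, b (j + 1))` for `j < m`, covering `[s, e)`. -/
structure IsGreedyWindowPartition (β : ℕ → ℕ) (ι s e m : ℕ) (b : ℕ → ℕ) : Prop where
  first : b 0 = s
  last : b m = e
  lt_succ : ∀ j < m, b j < b (j + 1)
  window : ∀ j < m, ∀ p, b j ≤ p → p < b (j + 1) → β p ≤ β (b j) + ι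
  gap : ∀ j, j + 1 < m → β (b j) + ι < β (b (j + 1))

def consLeader (s : ℕ) (b : ℕ → ℕ) : ℕ → ℕ
  | 0 => s
  | j + 1 => b j

namespace IsGreedyWindowPartition

variable {β : ℕ → ℕ} {ι s e m : ℕ} {b : ℕ → ℕ}

theorem nil (β : ℕ → ℕ) (ι e : ℕ) : IsGreedyWindowPartition β ι e e 0 fun _ => e where
  first := rfl
  last := rfl
  lt_succ _ h := absurd h (Nat.not_lt_zero _)
  window _ h := absurd h (Nat.not_lt_zero _)
  gap _ h := absurd h (by omega)

theorem cons {t : ℕ} (P : IsGreedyWindowPartition β ι t e m b) (hst : s < t)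
    (hwindow : ∀ p, s ≤ p → p < t → β p ≤ β s + ι) (hgap : 0 < m → β s + ι < β t) :
    IsGreedyWindowPartition β ι s e (m + 1) (consLeader s b) where
  first := rfl
  last := P.last
  lt_succ
    | 0, _ => show s < b 0 from P.first ▸ hst
    | j + 1, hj => P.lt_succ j (by omega)
  window
    | 0, _ => show ∀ p, s ≤ p → p < b 0 → β p ≤ β s + ι from P.first ▸ hwindow
    | j + 1, hj => P.window j (by omega)
  gap
    | 0, hj => show β s + ι < β (b 0) from P.first ▸ hgap (by omega)
    | j + 1, hj => P.gap j (by omega)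

theorem strictMonoOn (P : IsGreedyWindowPartition β ι s e m b) : StrictMonoOn b (Set.Iic m) :=
  strictMonoOn_Iic_of_lt_succ P.lt_succ

theorem first_le (P : IsGreedyWindowPartition β ι s e m b) {j : ℕ} (hj : j ≤ m) : s ≤ b j :=
  P.first ▸ P.strictMonoOn.monotoneOn (Set.mem_Iic.2 (Nat.zero_le m)) hj (Nat.zero_le j)

theorem le_last (P : IsGreedyWindowPartition β ι s e m b) {j : ℕ} (hj : j ≤ m) : b j ≤ e :=
  P.last ▸ P.strictMonoOn.monotoneOn hj Set.self_mem_Iic hj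

theorem pos (P : IsGreedyWindowPartition β ι s e m b) (hse : s < e) : 0 < m :=
  Nat.pos_of_ne_zero fun hm => by subst hm; exact hse.ne (P.first.symm.trans P.last)

/-- The spread bound: the leader `b j` has the least time in its block. -/
theorem sub_le (P : IsGreedyWindowPartition β ι s e m b) (hβ : MonotoneOn β (Set.Ico s e))
    {j : ℕ} (hj : j < m) {p q : ℕ} (hp : b j ≤ p) (hp' : p < b (j + 1)) (hq : b j ≤ q)
    (hq' : q < b (j + 1)) : β q - β p ≤ ι := by
  have hbj : b j ∈ Set.Ico s e := ⟨P.first_le hj.le, (P.lt_succ j hj).trans_le (P.le_last hj)⟩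
  have hpe : p < e := hp'.trans_le (P.le_last hj)
  have hleader : β (b j) ≤ β p := hβ hbj ⟨hbj.1.trans hp, hpe⟩ hp
  have hwindow := P.window j hj q hq hq'
  omega

end IsGreedyWindowPartition

open IsGreedyWindowPartition in
theorem exists_isGreedyWindowPartition (β : ℕ → ℕ) (ι : ℕ) {s e : ℕ} (hse : s ≤ e) :
    ∃ m b, IsGreedyWindowPartition β ι s e m b := by
  induction hn : e - s using Nat.strong_induction_on generalizing s with
  | _ n ih =>
    obtain rfl | hse := hse.eq_or_lt
    · exact ⟨0, _, nil β ι s⟩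
    have hnext : ∃ t, s < t ∧ (t = e ∨ β s + ι < β t) := ⟨e, hse, .inl rfl⟩
    -- `t` is the next leader: the first position beyond the window of `s`, or `e`.
    set t := Nat.find hnext
    have hst : s < t := (Nat.find_spec hnext).1
    have hwindow : ∀ p, s ≤ p → p < t → β p ≤ β s + ι := by
      intro p hsp hpt
      rcases hsp.eq_or_lt with rfl | hsp
      · exact Nat.le_add_right _ _
      · exact le_of_not_gt fun hp => Nat.find_min hnext hpt ⟨hsp, .inr hp⟩
    have hte : t ≤ e := Nat.find_min' hnext ⟨hse, .inl rfl⟩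
    rcases hte.eq_or_lt with hte | hte
    · have P : IsGreedyWindowPartition β ι t e 0 fun _ => e := by rw [← hte]; exact nil β ι t
      exact ⟨1, _, P.cons hst hwindow (absurd · (Nat.lt_irrefl 0))⟩
    · have hgap : β s + ι < β t := (Nat.find_spec hnext).2.resolve_left hte.ne
      obtain ⟨m, b, P⟩ := ih (e - t) (by omega) hte.le rfl
      exact ⟨m + 1, _, P.cons hst hwindow fun _ => hgap⟩

/-- Shifting-window grouping of the Grouping Rule: for tentative replacement times `β`
sorted over positions `1,…,k`, and any window length `ι`, the greedy procedure yields a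
partition of `{1,…,k}` into consecutive intervals (blocks `[b j, b (j+1))` with `b 0 = 1`
and `b m = k+1`) such that every member of a block lies within `ι` of the block leader,
each new block leader lies strictly beyond the previous leader's window, and within each
block the spread `max β − min β` is at most `ι`. -/
theorem greedy_window_partition (k ι : ℕ) (β : ℕ → ℕ) (hk : 1 ≤ k)
    (hsorted : ∀ p q, 1 ≤ p → p ≤ q → q ≤ k → β p ≤ β q) :
    ∃ (m : ℕ) (b : ℕ → ℕ), 0 < m ∧ b 0 = 1 ∧ b m = k + 1 ∧
      (∀ j, j < m → b j < b (j + 1)) ∧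
      (∀ j, j < m → ∀ p, b j ≤ p → p < b (j + 1) → β p ≤ β (b j) + ι) ∧
      (∀ j, j + 1 < m → β (b j) + ι < β (b (j + 1))) ∧
      (∀ j, j < m → ∀ p q, b j ≤ p → p < b (j + 1) → b j ≤ q → q < b (j + 1) →
        β q - β p ≤ ι) := by
  obtain ⟨m, b, P⟩ := exists_isGreedyWindowPartition β ι (show 1 ≤ k + 1 by omega)
  have hmono : MonotoneOn β (Set.Ico 1 (k + 1)) := fun p hp q hq hpq =>
    hsorted p q hp.1 hpq (Nat.lt_succ_iff.mp hq.2)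
  exact ⟨m, b, P.pos (by omega), P.first, P.last, P.lt_succ, P.window, P.gap,
    fun j hj p q => P.sub_le hmono hj⟩
end

section
/- Consider two groups λ and λ+1 replaced at times t_λ < t_{λ+1} in a feasible schedule, where every individual in λ has not-used-residual lifetime at least ε_λ > 1. If t_{λ+1} ≥ t_λ + ε_λ, then delaying all replacements in group λ to time t_λ + ε_λ − 1 preserves feasibility and total cost, and the minimum not-used-residual lifetime of the shifted group becomes exactly 1. -/
open Finset

/-!
Delaying the group only renames its replacement time `t0` to the unused time `t0 + ε - 1`, so
the number of distinct setup times is unchanged; and since `t0 < t0 + ε - 1 < f i` on the group,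
every replacement that was preventive stays preventive, so no individual cost changes.
-/

section

variable {ι α : Type*}

theorem Feasible.ite_mem [DecidableEq ι] {f τ : ι → ℕ} (hτ : Feasible f τ) {G : Finset ι} {s : ℕ}
    (hs : 1 ≤ s) (hsf : ∀ i ∈ G, s ≤ f i) :
    Feasible f fun i => if i ∈ G then s else τ i := fun i => by
  dsimp only
  split_ifs with hi
  exacts [⟨hs, hsf i hi⟩, hτ i]

variable [Fintype ι]

theorem card_image_relabel [DecidableEq α] (τ : ι → α) {a b : α} (hb : b ∉ Set.range τ) :
    (univ.image fun i => if τ i = a then b else τ i).card = (univ.image τ).card := by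
  rw [show (fun i => if τ i = a then b else τ i) = (fun x => if x = a then b else x) ∘ τ from rfl,
    ← image_image]
  refine card_image_of_injOn fun x hx y hy hxy => ?_
  obtain ⟨i, -, rfl⟩ := mem_image.mp hx
  obtain ⟨j, -, rfl⟩ := mem_image.mp hy
  split_ifs at hxy with hi hj hj
  · rw [hi, hj]
  · exact absurd ⟨j, hxy.symm⟩ hb
  · exact absurd ⟨i, hxy⟩ hb
  · exact hxy

variable [DecidableEq ι]

theorem totalCost_relabel (f : ι → ℕ) (cpr ccr : ι → ℝ) (d : ℝ) (τ : ι → ℕ) {a b : ℕ}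
    (hb : b ∉ Set.range τ) (hprev : ∀ i, τ i = a → a ≠ f i ∧ b ≠ f i) :
    totalCost f cpr ccr d (fun i => if τ i = a then b else τ i) = totalCost f cpr ccr d τ := by
  have hcorr : ∀ i, ((if τ i = a then b else τ i) = f i ↔ τ i = f i) := fun i => by
    split_ifs with hi
    · simp only [(hprev i hi).2, false_iff]
      exact hi ▸ (hprev i hi).1
    · rfl
  simp only [totalCost, hcorr, card_image_relabel τ hb]

end

theorem delay_group_preserves_cost_general
    {ι : Type*} [Fintype ι] [DecidableEq ι]
    (f : ι → ℕ) (cpr ccr : ι → ℝ) (d : ℝ)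
    (τ : ι → ℕ) (hτ : Feasible f τ)
    (G : Finset ι) (t0 ε : ℕ)
    (hε : 1 < ε)
    (hτG : ∀ i ∈ G, τ i = t0)
    (hres : ∀ i ∈ G, t0 + ε ≤ f i)
    (hattain : ∃ i ∈ G, f i = t0 + ε)
    (honly : ∀ i ∉ G, τ i ≠ t0)
    (hgap : ∀ i ∉ G, τ i ≤ t0 ∨ t0 + ε ≤ τ i) :
    Feasible f (fun i => if i ∈ G then t0 + ε - 1 else τ i) ∧
    totalCost f cpr ccr d (fun i => if i ∈ G then t0 + ε - 1 else τ i)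
      = totalCost f cpr ccr d τ ∧
    (∀ i ∈ G, 1 ≤ f i - (t0 + ε - 1)) ∧
    (∃ i ∈ G, f i - (t0 + ε - 1) = 1) := by
  obtain ⟨i0, hi0, hfi0⟩ := hattain
  have ht0 : 1 ≤ t0 := hτG i0 hi0 ▸ (hτ i0).1
  have hmem_iff : ∀ i, i ∈ G ↔ τ i = t0 := fun i => ⟨hτG i, fun h => by_contra (honly i · h)⟩
  have hfree : t0 + ε - 1 ∉ Set.range τ := by
    rintro ⟨i, hi⟩
    by_cases hiG : i ∈ G
    · have := hτG i hiG; omega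
    · have := hgap i hiG; omega
  refine ⟨hτ.ite_mem (by omega) fun i hi => by have := hres i hi; omega, ?_,
    fun i hi => by have := hres i hi; omega, ⟨i0, hi0, by omega⟩⟩
  simp_rw [hmem_iff]
  refine totalCost_relabel f cpr ccr d τ hfree fun i hi => ?_
  have := hres i ((hmem_iff i).mpr hi)
  omega

/-- Scenario 1 in the proof of Theorem 1: a group `G` is replaced at time `t0`, its minimum
not-used-residual lifetime is `ε > 1` (every member satisfies `t0 + ε ≤ f i`, with equality
attained), no other individual is replaced at `t0` or at any time in `(t0, t0 + ε)`.
Then delaying the whole group to `t0 + ε − 1` preserves feasibility and total cost, and the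
minimum not-used-residual lifetime of the shifted group becomes exactly `1`. -/
theorem delay_group_preserves_cost
    {ι : Type*} [Fintype ι] [DecidableEq ι]
    (f : ι → ℕ) (cpr ccr : ι → ℝ) (d : ℝ)
    (hc : ∀ i, cpr i < ccr i) (hd : 0 < d)
    (τ : ι → ℕ) (hτ : Feasible f τ)
    (G : Finset ι) (t0 ε : ℕ)
    (hG : G.Nonempty) (hε : 1 < ε)
    (hτG : ∀ i ∈ G, τ i = t0)
    (hres : ∀ i ∈ G, t0 + ε ≤ f i)
    (hattain : ∃ i ∈ G, f i = t0 + ε)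
    (honly : ∀ i ∉ G, τ i ≠ t0)
    (hgap : ∀ i ∉ G, τ i ≤ t0 ∨ t0 + ε ≤ τ i) :
    Feasible f (fun i => if i ∈ G then t0 + ε - 1 else τ i) ∧
    totalCost f cpr ccr d (fun i => if i ∈ G then t0 + ε - 1 else τ i)
      = totalCost f cpr ccr d τ ∧
    (∀ i ∈ G, 1 ≤ f i - (t0 + ε - 1)) ∧
    (∃ i ∈ G, f i - (t0 + ε - 1) = 1) :=
  delay_group_preserves_cost_general f cpr ccr d τ hτ G t0 ε hε hτG hres hattain honly hgap
end

section
/- If all k individuals replaced at separate adjacent times are merged so that two consecutive groups λ and λ+1 with t_{λ+1} < t_λ + ε_λ are combined into one group replaced at time t_{λ+1} (excluding individuals of λ+1 whose predecessor is in λ), the resulting schedule is feasible and its total cost is at most the original cost; if the excluded set is empty the new cost is strictly smaller by exactly one setup cost d. -/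
open Finset

/-!
Moving the group `G1` from `t1` to `t2`, and the excluded individuals `E ⊆ G2` to a common
later time, only delays replacements, so every predecessor constraint survives; and since all
new times stay strictly below the failure times, no preventive replacement becomes corrective.
Hence only the setup term changes. The time `t1` disappears from the set of occasions, while
`t2` was already used and the common time of `E` adds at most one new occasion: the number of
setups does not grow, and drops by exactly one when `E = ∅`.
-/

section TotalCost

variable {ι : Type*} [Fintype ι] [DecidableEq ι] {f : ι → ℕ} {cpr ccr : ι → ℝ} {d : ℝ}
  {τ τ' : ι → ℕ}

theorem totalCost_eq_add_of_eq_iff (h : ∀ i, τ' i = f i ↔ τ i = f i) :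
    totalCost f cpr ccr d τ' =
      totalCost f cpr ccr d τ + d * ((#(univ.image τ') : ℝ) - #(univ.image τ)) := by
  unfold totalCost
  simp only [h]
  ring

theorem totalCost_le_of_card_image_le (h : ∀ i, τ' i = f i ↔ τ i = f i) (hd : 0 ≤ d)
    (hcard : #(univ.image τ') ≤ #(univ.image τ)) :
    totalCost f cpr ccr d τ' ≤ totalCost f cpr ccr d τ := by
  have hsetup : d * ((#(univ.image τ') : ℝ) - #(univ.image τ)) ≤ 0 :=
    mul_nonpos_of_nonneg_of_nonpos hd (sub_nonpos.2 (Nat.cast_le.2 hcard))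
  rw [totalCost_eq_add_of_eq_iff h]
  linarith

theorem totalCost_eq_sub_of_card_image_add_one (h : ∀ i, τ' i = f i ↔ τ i = f i)
    (hcard : #(univ.image τ') + 1 = #(univ.image τ)) :
    totalCost f cpr ccr d τ' = totalCost f cpr ccr d τ - d := by
  rw [totalCost_eq_add_of_eq_iff h, ← hcard]
  push_cast
  ring

end TotalCost

section MergedSchedule

variable {ι : Type*} [DecidableEq ι] {G1 E : Finset ι} {t1 t2 : ℕ} {σ τ : ι → ℕ}

def mergedSchedule (G1 E : Finset ι) (t2 : ℕ) (σ τ : ι → ℕ) : ι → ℕ :=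
  fun i => if i ∈ G1 then t2 else if i ∈ E then σ i else τ i

theorem feasible_mergedSchedule {f : ι → ℕ} (hτ : Feasible f τ) (ht2 : 1 ≤ t2)
    (hG1 : ∀ i ∈ G1, t2 ≤ f i) (hE : ∀ i ∈ E, 1 ≤ σ i ∧ σ i ≤ f i) :
    Feasible f (mergedSchedule G1 E t2 σ τ) := by
  intro i
  dsimp only [mergedSchedule]
  split_ifs with hi1 hiE
  · exact ⟨ht2, hG1 i hi1⟩
  · exact hE i hiE
  · exact hτ i

theorem le_mergedSchedule (hG1 : ∀ i ∈ G1, τ i ≤ t2) (hE : ∀ i ∈ E, τ i ≤ σ i) (i : ι) :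
    τ i ≤ mergedSchedule G1 E t2 σ τ i := by
  dsimp only [mergedSchedule]
  split_ifs with hi1 hiE
  · exact hG1 i hi1
  · exact hE i hiE
  · exact le_rfl

theorem mergedSchedule_eq_iff {f : ι → ℕ} (hG1 : ∀ i ∈ G1, τ i ≠ f i ∧ t2 ≠ f i)
    (hE : ∀ i ∈ E, τ i ≠ f i ∧ σ i ≠ f i) (i : ι) :
    mergedSchedule G1 E t2 σ τ i = f i ↔ τ i = f i := by
  dsimp only [mergedSchedule]
  split_ifs with hi1 hiE
  · exact iff_of_false (hG1 i hi1).2 (hG1 i hi1).1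
  · exact iff_of_false (hE i hiE).2 (hE i hiE).1
  · exact Iff.rfl

theorem mergedSchedule_lt_of_pred {pred : ι → Option ι}
    (hpred : ∀ i j, pred i = some j → τ j < τ i)
    (hdelay : ∀ i, τ i ≤ mergedSchedule G1 E t2 σ τ i)
    (hσ : ∀ i, ∀ j ∈ E, pred i = some j → σ j < τ i)
    (hG1 : ∀ i, ∀ j ∈ G1, pred i = some j → t2 < mergedSchedule G1 E t2 σ τ i)
    (i j : ι) (hij : pred i = some j) :
    mergedSchedule G1 E t2 σ τ j < mergedSchedule G1 E t2 σ τ i := by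
  by_cases hj1 : j ∈ G1
  · simpa only [mergedSchedule, if_pos hj1] using hG1 i j hj1 hij
  by_cases hjE : j ∈ E
  · calc mergedSchedule G1 E t2 σ τ j = σ j := by
          simp only [mergedSchedule, hj1, hjE, if_false, if_true]
      _ < τ i := hσ i j hjE hij
      _ ≤ _ := hdelay i
  · calc mergedSchedule G1 E t2 σ τ j = τ j := by
          simp only [mergedSchedule, hj1, hjE, if_false]
      _ < τ i := hpred i j hij
      _ ≤ _ := hdelay i

theorem lt_mergedSchedule_of_pred_mem {pred : ι → Option ι} {G2 : Finset ι}
    (hpred : ∀ i j, pred i = some j → τ j < τ i) (hτG1 : ∀ i ∈ G1, τ i = t1)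
    (hE : ∀ i ∈ G2, ∀ j ∈ G1, pred i = some j → i ∈ E) (hσ : ∀ i ∈ E, t2 < σ i)
    (hsucc : ∀ i, i ∉ G1 → i ∉ G2 → ∀ j ∈ G1, pred i = some j → t2 < τ i)
    (i j : ι) (hj : j ∈ G1) (hij : pred i = some j) :
    t2 < mergedSchedule G1 E t2 σ τ i := by
  have hi1 : i ∉ G1 := fun hi1 => by
    have := hpred i j hij
    rw [hτG1 i hi1, hτG1 j hj] at this
    exact lt_irrefl _ this
  by_cases hiE : i ∈ E
  · simpa only [mergedSchedule, hi1, hiE, if_false, if_true] using hσ i hiE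
  · have hi2 : i ∉ G2 := fun hi2 => hiE (hE i hi2 j hj hij)
    simpa only [mergedSchedule, hi1, hiE, if_false] using hsucc i hi1 hi2 j hj hij

theorem image_mergedSchedule_subset [Fintype ι] (honly1 : ∀ i ∉ G1, τ i ≠ t1)
    (ht2 : t2 ∈ univ.image τ) (ht12 : t2 ≠ t1) :
    univ.image (mergedSchedule G1 E t2 σ τ) ⊆ (univ.image τ).erase t1 ∪ E.image σ := by
  intro t ht
  obtain ⟨i, -, rfl⟩ := mem_image.1 ht
  dsimp only [mergedSchedule]
  split_ifs with hi1 hiE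
  · exact mem_union_left _ (mem_erase.2 ⟨ht12, ht2⟩)
  · exact mem_union_right _ (mem_image_of_mem σ hiE)
  · exact mem_union_left _ (mem_erase.2 ⟨honly1 i hi1, mem_image_of_mem τ (mem_univ i)⟩)

theorem card_image_mergedSchedule_le [Fintype ι] (honly1 : ∀ i ∉ G1, τ i ≠ t1)
    (ht1 : t1 ∈ univ.image τ) (ht2 : t2 ∈ univ.image τ) (ht12 : t2 ≠ t1)
    (hσ : ∀ i ∈ E, ∀ j ∈ E, σ i = σ j) :
    #(univ.image (mergedSchedule G1 E t2 σ τ)) ≤ #(univ.image τ) := by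
  have hσcard : #(E.image σ) ≤ 1 := by
    simpa only [card_le_one, forall_mem_image] using hσ
  have hpos : 0 < #(univ.image τ) := card_pos.2 ⟨t1, ht1⟩
  calc #(univ.image (mergedSchedule G1 E t2 σ τ))
      ≤ #((univ.image τ).erase t1 ∪ E.image σ) :=
        card_le_card (image_mergedSchedule_subset honly1 ht2 ht12)
    _ ≤ #((univ.image τ).erase t1) + #(E.image σ) := card_union_le _ _
    _ ≤ #(univ.image τ) := by rw [card_erase_of_mem ht1]; omega

theorem card_image_mergedSchedule_empty_add_one [Fintype ι] (hτG1 : ∀ i ∈ G1, τ i = t1)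
    (honly1 : ∀ i ∉ G1, τ i ≠ t1) (ht1 : t1 ∈ univ.image τ) (ht2 : t2 ∈ univ.image τ)
    (ht12 : t2 ≠ t1) :
    #(univ.image (mergedSchedule G1 ∅ t2 σ τ)) + 1 = #(univ.image τ) := by
  have himage : univ.image (mergedSchedule G1 ∅ t2 σ τ) = (univ.image τ).erase t1 := by
    refine ((image_mergedSchedule_subset honly1 ht2 ht12).trans (by simp)).antisymm ?_
    intro t ht
    obtain ⟨hne, i, -, rfl⟩ := by simpa only [mem_erase, mem_image] using ht
    have hi1 : i ∉ G1 := fun hi1 => hne (hτG1 i hi1)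
    exact mem_image.2 ⟨i, mem_univ i, by simp [mergedSchedule, hi1]⟩
  rw [himage, card_erase_add_one ht1]

end MergedSchedule

theorem merge_groups_reduces_cost_general
    {ι : Type*} [Fintype ι] [DecidableEq ι]
    (f : ι → ℕ) (cpr ccr : ι → ℝ) (d : ℝ) (pred : ι → Option ι)
    (hd : 0 < d)
    (τ : ι → ℕ) (hτ : Feasible f τ)
    (hpred : ∀ i j, pred i = some j → τ j < τ i)
    (G1 G2 E : Finset ι) (t1 t2 ε : ℕ) (σ : ι → ℕ)
    (hG1 : G1.Nonempty) (hG2 : G2.Nonempty)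
    (ht12 : t1 < t2) (ht2 : t2 < t1 + ε)
    (hτG1 : ∀ i ∈ G1, τ i = t1) (hτG2 : ∀ i ∈ G2, τ i = t2)
    (hres : ∀ i ∈ G1, t1 + ε ≤ f i)
    (honly1 : ∀ i ∉ G1, τ i ≠ t1)
    (hE : ∀ i, i ∈ E ↔ i ∈ G2 ∧ ∃ j ∈ G1, pred i = some j)
    (hσ : ∀ i ∈ E, t2 < σ i ∧ σ i < f i)
    (hσeq : ∀ i ∈ E, ∀ j ∈ E, σ i = σ j)
    (hσlt : ∀ i, ∀ j ∈ E, pred i = some j → σ j < τ i)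
    (hsucc : ∀ i, i ∉ G1 → i ∉ G2 → ∀ j ∈ G1, pred i = some j → t2 < τ i) :
    Feasible f (fun i => if i ∈ G1 then t2 else if i ∈ E then σ i else τ i) ∧
    (∀ i j, pred i = some j →
      (if j ∈ G1 then t2 else if j ∈ E then σ j else τ j) <
      (if i ∈ G1 then t2 else if i ∈ E then σ i else τ i)) ∧
    totalCost f cpr ccr d (fun i => if i ∈ G1 then t2 else if i ∈ E then σ i else τ i)
      ≤ totalCost f cpr ccr d τ ∧
    (E = ∅ →
      totalCost f cpr ccr d (fun i => if i ∈ G1 then t2 else if i ∈ E then σ i else τ i)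
        = totalCost f cpr ccr d τ - d) := by
  obtain ⟨a1, ha1⟩ := hG1
  obtain ⟨a2, ha2⟩ := hG2
  have ht1im : t1 ∈ univ.image τ := mem_image.2 ⟨a1, mem_univ a1, hτG1 a1 ha1⟩
  have ht2im : t2 ∈ univ.image τ := mem_image.2 ⟨a2, mem_univ a2, hτG2 a2 ha2⟩
  have ht2pos : 1 ≤ t2 := ((hτ a1).1.trans_eq (hτG1 a1 ha1)).trans ht12.le
  have hG1f : ∀ i ∈ G1, t2 < f i := fun i hi => ht2.trans_le (hres i hi)
  have hτE : ∀ i ∈ E, τ i = t2 := fun i hi => hτG2 i ((hE i).1 hi).1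
  have hdelay := le_mergedSchedule (E := E) (σ := σ)
    (fun i hi => (hτG1 i hi).trans_le ht12.le) (fun i hi => (hτE i hi).trans_le (hσ i hi).1.le)
  have hsame := mergedSchedule_eq_iff (G1 := G1) (E := E) (t2 := t2) (σ := σ) (τ := τ) (f := f)
    (fun i hi => ⟨(hτG1 i hi).trans_ne (ht12.trans (hG1f i hi)).ne, (hG1f i hi).ne⟩)
    (fun i hi => ⟨(hτE i hi).trans_ne ((hσ i hi).1.trans (hσ i hi).2).ne, (hσ i hi).2.ne⟩)
  have hafterG1 := lt_mergedSchedule_of_pred_mem hpred hτG1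
    (fun i hi j hj hij => (hE i).2 ⟨hi, j, hj, hij⟩) (fun i hi => (hσ i hi).1) hsucc
  refine ⟨feasible_mergedSchedule hτ ht2pos (fun i hi => (hG1f i hi).le)
      (fun i hi => ⟨Nat.zero_lt_of_lt (hσ i hi).1, (hσ i hi).2.le⟩),
    mergedSchedule_lt_of_pred hpred hdelay hσlt hafterG1,
    totalCost_le_of_card_image_le hsame hd.le
      (card_image_mergedSchedule_le honly1 ht1im ht2im ht12.ne' hσeq),
    fun hE0 => ?_⟩
  subst hE0
  exact totalCost_eq_sub_of_card_image_add_one hsame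
    (card_image_mergedSchedule_empty_add_one hτG1 honly1 ht1im ht2im ht12.ne')

/-- Scenario 2 in the proof of Theorem 1: group `G1` (replaced at `t1`, with minimum
not-used-residual lifetime `ε > 1`) and group `G2` (replaced at `t2`, `t1 < t2 < t1 + ε`)
are merged: all of `G1` and of `G2 \ E` are replaced at `t2`, where `E ⊆ G2` consists of the
individuals of `G2` whose immediate predecessor is in `G1`; these are moved to a common
later preventive time `σ`. The resulting schedule is feasible (including the
predecessor-order constraints) and its total cost is at most the original; if `E = ∅` the
new cost is smaller by exactly one setup cost `d`. -/
theorem merge_groups_reduces_cost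
    {ι : Type*} [Fintype ι] [DecidableEq ι]
    (f : ι → ℕ) (cpr ccr : ι → ℝ) (d : ℝ) (pred : ι → Option ι)
    (hc : ∀ i, cpr i ≤ ccr i) (hd : 0 < d)
    (τ : ι → ℕ) (hτ : Feasible f τ)
    (hpred : ∀ i j, pred i = some j → τ j < τ i)
    (G1 G2 E : Finset ι) (t1 t2 ε : ℕ) (σ : ι → ℕ)
    (hG1 : G1.Nonempty) (hG2 : G2.Nonempty) (hdisj : Disjoint G1 G2)
    (hε : 1 < ε) (ht12 : t1 < t2) (ht2 : t2 < t1 + ε)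
    (hτG1 : ∀ i ∈ G1, τ i = t1) (hτG2 : ∀ i ∈ G2, τ i = t2)
    (hres : ∀ i ∈ G1, t1 + ε ≤ f i)
    (honly1 : ∀ i ∉ G1, τ i ≠ t1) (honly2 : ∀ i ∉ G2, τ i ≠ t2)
    (hE : ∀ i, i ∈ E ↔ i ∈ G2 ∧ ∃ j ∈ G1, pred i = some j)
    (hσ : ∀ i ∈ E, t2 < σ i ∧ σ i < f i)
    (hσeq : ∀ i ∈ E, ∀ j ∈ E, σ i = σ j)
    (hσlt : ∀ i, ∀ j ∈ E, pred i = some j → σ j < τ i)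
    (hsucc : ∀ i, i ∉ G1 → i ∉ G2 → ∀ j ∈ G1, pred i = some j → t2 < τ i) :
    Feasible f (fun i => if i ∈ G1 then t2 else if i ∈ E then σ i else τ i) ∧
    (∀ i j, pred i = some j →
      (if j ∈ G1 then t2 else if j ∈ E then σ j else τ j) <
      (if i ∈ G1 then t2 else if i ∈ E then σ i else τ i)) ∧
    totalCost f cpr ccr d (fun i => if i ∈ G1 then t2 else if i ∈ E then σ i else τ i)
      ≤ totalCost f cpr ccr d τ ∧
    (E = ∅ →
      totalCost f cpr ccr d (fun i => if i ∈ G1 then t2 else if i ∈ E then σ i else τ i)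
        = totalCost f cpr ccr d τ - d) :=
  merge_groups_reduces_cost_general f cpr ccr d pred hd τ hτ hpred G1 G2 E t1 t2 ε σ hG1 hG2 ht12
    ht2 hτG1 hτG2 hres honly1 hE hσ hσeq hσlt hsucc
end
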